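/- arXiv:1809.00063 — 3 statements merged into one kernel-verified Lean document; each statement's English description precedes it below -/
import Mathlib

section
/- Let X be a set with a right self-distributive binary operation ▷, and let C_n = ℤX^{n+1} be the free abelian group on (n+1)-tuples of elements of X. Define ∂_n^{(▷)} : C_n → C_{n−1} on generators by ∂_n^{(▷)}(x_0, …, x_n) = (x_1, …, x_n) + Σ_{i=1}^{n} (−1)^i (x_0 ▷ x_i, …, x_{i−1} ▷ x_i, x_{i+1}, …, x_n). Then ∂_{n−1}^{(▷)} ∘ ∂_n^{(▷)} = 0 for all n ≥ 1, so (C_n, ∂_n^{(▷)}) is a chain complex (the one-term distributive chain complex of (X, ▷)). -/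
/-- The face map `d_{i}` (for `1 ≤ i ≤ n+1`) of a right self-distributive structure,
sending `(x_0, …, x_{n+1})` to `(x_0 ▷ x_i, …, x_{i-1} ▷ x_i, x_{i+1}, …, x_{n+1})`
(with a junk value when `i` is out of range, which never occurs in its use below). -/
def distribFace {X : Type*} (op : X → X → X) (n : ℕ) (i : ℕ)
    (x : Fin (n + 2) → X) : Fin (n + 1) → X :=
  fun j => if h : (j : ℕ) < i ∧ i < n + 2 then op (x j.castSucc) (x ⟨i, h.2⟩) else x j.succ

/-- The one-term distributive boundary `∂^{(▷)} : ℤX^{n+2} → ℤX^{n+1}`, defined on a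
generator `(x_0, …, x_{n+1})` as
`(x_1, …, x_{n+1}) + Σ_{i=1}^{n+1} (-1)^i (x_0 ▷ x_i, …, x_{i-1} ▷ x_i, x_{i+1}, …, x_{n+1})`. -/
noncomputable def oneTermBoundary {X : Type*} (op : X → X → X) (n : ℕ) :
    ((Fin (n + 2) → X) →₀ ℤ) →ₗ[ℤ] ((Fin (n + 1) → X) →₀ ℤ) :=
  Finsupp.lift ((Fin (n + 1) → X) →₀ ℤ) ℤ (Fin (n + 2) → X) fun x =>
    Finsupp.single (fun j => x j.succ) (1 : ℤ) +
      ∑ i ∈ Finset.Icc 1 (n + 1), ((-1 : ℤ) ^ i) • Finsupp.single (distribFace op n i x) (1 : ℤ)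

/-!
Writing `d_i` for `distribFace op n i`, the boundary is the alternating sum `∑ (-1)^i d_i` over
`0 ≤ i ≤ n + 1`, since `d_0` drops the first coordinate. Right self-distributivity is exactly what
makes the faces satisfy the presimplicial identities `d_i ∘ d_{j+1} = d_j ∘ d_i` for `i ≤ j`, and
for any such family the terms of `∂ ∘ ∂` cancel in pairs `(i, k) ↔ (k + 1, i)`, as for the
alternating face map complex of a simplicial object.
-/

theorem alternating_double_sum_eq_zero {M : Type*} [AddCommGroup M] (n : ℕ) (g : ℕ → ℕ → M)
    (hg : ∀ i j, i ≤ j → j ≤ n → g (j + 1) i = g i j) :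
    ∑ i ∈ Finset.range (n + 2), ∑ k ∈ Finset.range (n + 1), (-1 : ℤ) ^ (i + k) • g i k = 0 := by
  rw [← Finset.sum_product']
  refine Finset.sum_involution (fun p _ => if p.2 < p.1 then (p.2, p.1 - 1) else (p.2 + 1, p.1))
    ?_ ?_ ?_ ?_
  · rintro ⟨i, k⟩ hp
    simp only [Finset.mem_product, Finset.mem_range] at hp
    split_ifs with h
    · obtain ⟨j, rfl⟩ : ∃ j, i = j + 1 := ⟨i - 1, by omega⟩
      rw [Nat.add_sub_cancel, hg k j (by omega) (by omega), ← add_smul]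
      convert zero_smul ℤ (g k j)
      ring
    · rw [hg i k (by omega) (by omega), ← add_smul]
      convert zero_smul ℤ (g i k)
      ring
  all_goals grind

section Presimplicial

variable {A : ℕ → Type*} (d : ∀ n, ℕ → A (n + 1) → A n)

noncomputable def alternatingFaceBoundary (n : ℕ) : (A (n + 1) →₀ ℤ) →ₗ[ℤ] (A n →₀ ℤ) :=
  Finsupp.lift (A n →₀ ℤ) ℤ (A (n + 1)) fun x =>
    ∑ i ∈ Finset.range (n + 2), (-1 : ℤ) ^ i • Finsupp.single (d n i x) 1

theorem alternatingFaceBoundary_single (n : ℕ) (x : A (n + 1)) :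
    alternatingFaceBoundary d n (Finsupp.single x 1) =
      ∑ i ∈ Finset.range (n + 2), (-1 : ℤ) ^ i • Finsupp.single (d n i x) 1 := by
  rw [alternatingFaceBoundary, Finsupp.lift_apply, Finsupp.sum_single_index (by rw [zero_smul]),
    one_smul]

theorem alternatingFaceBoundary_comp_eq_zero (n : ℕ)
    (hd : ∀ i j x, i ≤ j → j ≤ n + 1 → d n i (d (n + 1) (j + 1) x) = d n j (d (n + 1) i x)) :
    (alternatingFaceBoundary d n).comp (alternatingFaceBoundary d (n + 1)) = 0 := by
  refine Finsupp.lhom_ext' fun x => LinearMap.ext_ring ?_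
  have expand :
      alternatingFaceBoundary d n (alternatingFaceBoundary d (n + 1) (Finsupp.single x 1)) =
      ∑ i ∈ Finset.range (n + 3), ∑ k ∈ Finset.range (n + 2),
        (-1 : ℤ) ^ (i + k) • Finsupp.single (d n k (d (n + 1) i x)) 1 := by
    simp only [alternatingFaceBoundary_single, map_sum, map_zsmul, Finset.smul_sum, smul_smul,
      pow_add]
  simpa [expand] using alternating_double_sum_eq_zero (n + 1)
    (fun i k => Finsupp.single (d n k (d (n + 1) i x)) (1 : ℤ))
    fun i j hij hj => by rw [hd i j x hij hj]

end Presimplicial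

theorem distribFace_distribFace {X : Type*} {op : X → X → X}
    (hop : ∀ a b c : X, op (op a b) c = op (op a c) (op b c))
    {n i j : ℕ} (hij : i ≤ j) (hj : j ≤ n + 1) (x : Fin (n + 3) → X) :
    distribFace op n i (distribFace op (n + 1) (j + 1) x) =
      distribFace op n j (distribFace op (n + 1) i x) := by
  funext ⟨k, hk⟩
  simp only [distribFace, Fin.castSucc_mk, Fin.succ_mk]
  split_ifs <;> first | omega | rfl | exact (hop _ _ _).symm

theorem oneTermBoundary_eq_alternatingFaceBoundary {X : Type*} (op : X → X → X) (n : ℕ) :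
    oneTermBoundary op n =
      alternatingFaceBoundary (A := fun m => Fin (m + 1) → X) (distribFace op) n := by
  refine Finsupp.lhom_ext' fun x => LinearMap.ext_ring ?_
  have range_eq : Finset.range (n + 2) = insert 0 (Finset.Icc 1 (n + 1)) := by
    ext m; simp only [Finset.mem_range, Finset.mem_insert, Finset.mem_Icc]; omega
  have face_zero : distribFace op n 0 x = fun j => x j.succ := by
    funext j; simp [distribFace]
  simp only [LinearMap.comp_apply, Finsupp.lsingle_apply]
  rw [alternatingFaceBoundary_single, range_eq, Finset.sum_insert (by simp), pow_zero, one_smul,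
    face_zero, oneTermBoundary, Finsupp.lift_apply, Finsupp.sum_single_index (by rw [zero_smul]), one_smul]

/-- **The one-term distributive chain complex.** If `▷` is right self-distributive then
`∂^{(▷)}_{n} ∘ ∂^{(▷)}_{n+1} = 0` (here `oneTermBoundary op n` is the boundary
`C_{n+1} = ℤX^{n+2} → C_n = ℤX^{n+1}`). -/
theorem oneTermBoundary_squared_zero {X : Type*} (op : X → X → X)
    (hop : ∀ a b c : X, op (op a b) c = op (op a c) (op b c)) :
    ∀ n : ℕ, (oneTermBoundary op n).comp (oneTermBoundary op (n + 1)) = 0 := by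
  intro n
  rw [oneTermBoundary_eq_alternatingFaceBoundary, oneTermBoundary_eq_alternatingFaceBoundary]
  exact alternatingFaceBoundary_comp_eq_zero _ n
    fun _ _ x hij hj => distribFace_distribFace hop hij hj x
end

section
/- Let X be a set with a right self-distributive binary operation ▷, and let C_n = ℤX^{n+1} be the free abelian group on (n+1)-tuples of elements of X. For 0 ≤ i ≤ n define ℤ-linear maps d_{i}^{ℓ}, d_{i}^{r} : C_n → C_{n−1} on generators by d_{i}^{ℓ}(x_0, …, x_n) = (x_0 ▷ x_i, …, x_{i−1} ▷ x_i, x_{i+1}, …, x_n) and d_{i}^{r}(x_0, …, x_n) = (x_0, …, x_{i−1}, x_{i+1}, …, x_n), and set d_{i}^{R} = d_{i}^{ℓ} − d_{i}^{r}. Then for all 0 ≤ i < j ≤ n one has d_{i}^{R} ∘ d_{j}^{R} = d_{j−1}^{R} ∘ d_{i}^{R}; that is, (C_n, d_i^{R}) is a presimplicial module. -/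
/-- The "right" (trivial) face map `d_i^r`, sending `(x_0, …, x_{n+1})` to
`(x_0, …, x_{i-1}, x_{i+1}, …, x_{n+1})`, i.e. deleting the `i`-th coordinate. -/
def deleteFace {X : Type*} (n : ℕ) (i : ℕ) (x : Fin (n + 2) → X) : Fin (n + 1) → X :=
  fun j => if (j : ℕ) < i then x j.castSucc else x j.succ

/-- The ℤ-linear extension `d_i^ℓ : ℤX^{n+2} → ℤX^{n+1}`. -/
noncomputable def dl {X : Type*} (op : X → X → X) (n : ℕ) (i : ℕ) :
    ((Fin (n + 2) → X) →₀ ℤ) →ₗ[ℤ] ((Fin (n + 1) → X) →₀ ℤ) :=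
  Finsupp.lift ((Fin (n + 1) → X) →₀ ℤ) ℤ (Fin (n + 2) → X) fun x =>
    Finsupp.single (distribFace op n i x) (1 : ℤ)

/-- The ℤ-linear extension `d_i^r : ℤX^{n+2} → ℤX^{n+1}`. -/
noncomputable def dr {X : Type*} (n : ℕ) (i : ℕ) :
    ((Fin (n + 2) → X) →₀ ℤ) →ₗ[ℤ] ((Fin (n + 1) → X) →₀ ℤ) :=
  Finsupp.lift ((Fin (n + 1) → X) →₀ ℤ) ℤ (Fin (n + 2) → X) fun x =>
    Finsupp.single (deleteFace n i x) (1 : ℤ)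

/-- The two-term rack face map `d_i^R = d_i^ℓ - d_i^r`. -/
noncomputable def dR {X : Type*} (op : X → X → X) (n : ℕ) (i : ℕ) :
    ((Fin (n + 2) → X) →₀ ℤ) →ₗ[ℤ] ((Fin (n + 1) → X) →₀ ℤ) :=
  dl op n i - dr n i

section
variable {X : Type*}

theorem distribFace_comp_distribFace (op : X → X → X)
    (hop : ∀ a b c : X, op (op a b) c = op (op a c) (op b c))
    {n i j : ℕ} (hij : i < j) (hj : j ≤ n + 2) :
    distribFace op n i ∘ distribFace op (n + 1) j
      = distribFace op n (j - 1) ∘ distribFace op (n + 1) i := by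
  funext x k
  simp only [Function.comp, distribFace, Fin.val_castSucc, Fin.val_succ, Fin.castSucc_mk,
    Fin.succ_mk, Nat.sub_add_cancel (Nat.one_le_of_lt hij)]
  split_ifs <;> first | omega | rfl | exact (hop _ _ _).symm

theorem distribFace_comp_deleteFace (op : X → X → X) {n i j : ℕ} (hij : i < j)
    (hj : j ≤ n + 2) :
    distribFace op n i ∘ deleteFace (n + 1) j
      = deleteFace n (j - 1) ∘ distribFace op (n + 1) i := by
  funext x k
  simp only [Function.comp, distribFace, deleteFace, Fin.val_castSucc, Fin.val_succ]
  split_ifs <;> first | omega | rfl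

theorem deleteFace_comp_distribFace (op : X → X → X) {n i j : ℕ} (hij : i < j)
    (hj : j ≤ n + 2) :
    deleteFace n i ∘ distribFace op (n + 1) j
      = distribFace op n (j - 1) ∘ deleteFace (n + 1) i := by
  funext x k
  simp only [Function.comp, distribFace, deleteFace, Fin.val_castSucc, Fin.val_succ,
    Fin.castSucc_mk, Fin.succ_mk, Nat.sub_add_cancel (Nat.one_le_of_lt hij)]
  split_ifs <;> first | omega | rfl

theorem deleteFace_comp_deleteFace {n i j : ℕ} (hij : i < j) :
    deleteFace (X := X) n i ∘ deleteFace (n + 1) j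
      = deleteFace n (j - 1) ∘ deleteFace (n + 1) i := by
  funext x k
  simp only [Function.comp, deleteFace, Fin.val_castSucc, Fin.val_succ]
  split_ifs <;> first | omega | rfl

theorem dl_eq_lmapDomain (op : X → X → X) (n i : ℕ) :
    dl op n i = Finsupp.lmapDomain ℤ ℤ (distribFace op n i) := by
  ext; simp [dl]

theorem dr_eq_lmapDomain (n i : ℕ) :
    dr (X := X) n i = Finsupp.lmapDomain ℤ ℤ (deleteFace n i) := by
  ext; simp [dr]

end

/-- **Two-term rack face maps form a presimplicial module.**
If `▷` is right self-distributive then `d_i^R ∘ d_j^R = d_{j-1}^R ∘ d_i^R`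
for all `0 ≤ i < j ≤ n + 2` (here `dR op (n+1) j : ℤX^{n+3} → ℤX^{n+2}` and
`dR op n i : ℤX^{n+2} → ℤX^{n+1}`). -/
theorem dR_presimplicial {X : Type*} (op : X → X → X)
    (hop : ∀ a b c : X, op (op a b) c = op (op a c) (op b c)) :
    ∀ (n i j : ℕ), i < j → j ≤ n + 2 →
      (dR op n i).comp (dR op (n + 1) j) = (dR op n (j - 1)).comp (dR op (n + 1) i) := by
  intro n i j hij hj
  simp only [dR, dl_eq_lmapDomain, dr_eq_lmapDomain, LinearMap.sub_comp, LinearMap.comp_sub,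
    ← Finsupp.lmapDomain_comp, distribFace_comp_distribFace op hop hij hj,
    distribFace_comp_deleteFace op hij hj, deleteFace_comp_distribFace op hij hj,
    deleteFace_comp_deleteFace hij]
  abel
end

section
/- Let X be a set with a right self-distributive binary operation ▷, and let C_n = ℤX^{n+1} be the free abelian group on (n+1)-tuples of elements of X. Define ∂_n^{R} : C_n → C_{n−1} on generators by ∂_n^{R}(x_0, …, x_n) = Σ_{i=0}^{n} (−1)^i [ (x_0 ▷ x_i, …, x_{i−1} ▷ x_i, x_{i+1}, …, x_n) − (x_0, …, x_{i−1}, x_{i+1}, …, x_n) ]. Then ∂_{n−1}^{R} ∘ ∂_n^{R} = 0 for all n ≥ 1, so (C_n, ∂_n^{R}) is a chain complex (the two-term rack chain complex of (X, ▷)). -/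
set_option linter.unreachableTactic false
set_option linter.unnecessarySeqFocus false
set_option linter.unusedTactic false
set_option linter.unusedSectionVars false

theorem LL {X : Type*} (op : X → X → X)
    (hop : ∀ a b c : X, op (op a b) c = op (op a c) (op b c))
    (n i j : ℕ) (hij : i < j) (hj : j < n + 3) (x : Fin (n + 3) → X) :
    distribFace op n i (distribFace op (n + 1) j x) =
      distribFace op n (j - 1) (distribFace op (n + 1) i x) := by
  funext k
  simp only [distribFace, Fin.coe_castSucc, Fin.val_succ]
  split_ifs <;>
    first
      | omega
      | (rw [← hop]; congr 1 <;> congr 1 <;> (apply Fin.ext; simp; omega))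
      | (congr 1 <;> first | (apply Fin.ext; simp; omega) | (congr 1 <;> (apply Fin.ext; simp; omega)))
      | (apply Fin.ext; simp; omega)
      | (apply congrArg x; apply Fin.ext; simp; omega)

theorem LR {X : Type*} (op : X → X → X)
    (n i j : ℕ) (hij : i < j) (hj : j < n + 3) (x : Fin (n + 3) → X) :
    distribFace op n i (deleteFace (n + 1) j x) =
      deleteFace n (j - 1) (distribFace op (n + 1) i x) := by
  funext k
  simp only [distribFace, deleteFace, Fin.coe_castSucc, Fin.val_succ]
  split_ifs <;>
    first
      | omega
      | (congr 1 <;> first | (apply Fin.ext; simp; omega) | (congr 1 <;> (apply Fin.ext; simp; omega)))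
      | (apply Fin.ext; simp; omega)
      | (apply congrArg x; apply Fin.ext; simp; omega)

theorem RL {X : Type*} (op : X → X → X)
    (n i j : ℕ) (hij : i < j) (hj : j < n + 3) (x : Fin (n + 3) → X) :
    deleteFace n i (distribFace op (n + 1) j x) =
      distribFace op n (j - 1) (deleteFace (n + 1) i x) := by
  funext k
  simp only [distribFace, deleteFace, Fin.coe_castSucc, Fin.val_succ]
  split_ifs <;>
    first
      | omega
      | (congr 1 <;> first | (apply Fin.ext; simp; omega) | (congr 1 <;> (apply Fin.ext; simp; omega)))
      | (apply Fin.ext; simp; omega)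
      | (apply congrArg x; apply Fin.ext; simp; omega)

theorem RR {X : Type*}
    (n i j : ℕ) (hij : i < j) (hj : j < n + 3) (x : Fin (n + 3) → X) :
    deleteFace n i (deleteFace (n + 1) j x) =
      deleteFace n (j - 1) (deleteFace (n + 1) i x) := by
  funext k
  simp only [deleteFace, Fin.coe_castSucc, Fin.val_succ]
  split_ifs <;>
    first
      | omega
      | (apply congrArg x; apply Fin.ext; simp; done)
      | (apply congrArg x; apply Fin.ext; simp; omega)

/-- The two-term rack boundary `∂^R : ℤX^{n+2} → ℤX^{n+1}`, defined on a generator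
`(x_0, …, x_{n+1})` as
`Σ_{i=0}^{n+1} (-1)^i [(x_0 ▷ x_i, …, x_{i-1} ▷ x_i, x_{i+1}, …) - (x_0, …, x_{i-1}, x_{i+1}, …)]`. -/
noncomputable def rackBoundary {X : Type*} (op : X → X → X) (n : ℕ) :
    ((Fin (n + 2) → X) →₀ ℤ) →ₗ[ℤ] ((Fin (n + 1) → X) →₀ ℤ) :=
  Finsupp.lift ((Fin (n + 1) → X) →₀ ℤ) ℤ (Fin (n + 2) → X) fun x =>
    ∑ i ∈ Finset.range (n + 2), ((-1 : ℤ) ^ i) •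
      (Finsupp.single (distribFace op n i x) (1 : ℤ) -
        Finsupp.single (deleteFace n i x) (1 : ℤ))

theorem rackBoundary_single {X : Type*} (op : X → X → X) (n : ℕ) (x : Fin (n + 2) → X) :
    rackBoundary op n (Finsupp.single x 1) =
      ∑ i ∈ Finset.range (n + 2), ((-1 : ℤ) ^ i) •
        (Finsupp.single (distribFace op n i x) (1 : ℤ) -
          Finsupp.single (deleteFace n i x) (1 : ℤ)) := by
  simp [rackBoundary]

/-- **The two-term rack chain complex.** If `▷` is right self-distributive then
`∂^R_n ∘ ∂^R_{n+1} = 0` (here `rackBoundary op n` is the boundary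
`C_{n+1} = ℤX^{n+2} → C_n = ℤX^{n+1}`). -/
theorem rackBoundary_squared_zero {X : Type*} (op : X → X → X)
    (hop : ∀ a b c : X, op (op a b) c = op (op a c) (op b c)) :
    ∀ n : ℕ, (rackBoundary op n).comp (rackBoundary op (n + 1)) = 0 := by
  intro n
  apply Finsupp.lhom_ext
  intro x b
  have hb : (Finsupp.single x b : (Fin (n + 3) → X) →₀ ℤ) = b • Finsupp.single x 1 := by
    rw [Finsupp.smul_single, smul_eq_mul, mul_one]
  rw [LinearMap.comp_apply, hb, map_smul, map_smul, LinearMap.zero_apply]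
  suffices h : rackBoundary op n (rackBoundary op (n + 1) (Finsupp.single x 1)) = 0 by
    rw [h, smul_zero]
  set F : ℕ × ℕ → ((Fin (n + 1) → X) →₀ ℤ) := fun p =>
    ((-1 : ℤ) ^ p.2 * (-1 : ℤ) ^ p.1) •
      (Finsupp.single (distribFace op n p.1 (distribFace op (n + 1) p.2 x)) (1 : ℤ) -
        Finsupp.single (deleteFace n p.1 (distribFace op (n + 1) p.2 x)) (1 : ℤ) -
        (Finsupp.single (distribFace op n p.1 (deleteFace (n + 1) p.2 x)) (1 : ℤ) -
          Finsupp.single (deleteFace n p.1 (deleteFace (n + 1) p.2 x)) (1 : ℤ))) with hF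
  have hswap : ∀ i j : ℕ, i < j → j < n + 3 → F (i, j) = - F (j - 1, i) := by
    intro i j hij hj
    have hpow : (-1 : ℤ) ^ j = -(-1 : ℤ) ^ (j - 1) := by
      have h1 : (-1 : ℤ) ^ (j - 1 + 1) = (-1 : ℤ) ^ (j - 1) * (-1) := pow_succ _ _
      rw [show j - 1 + 1 = j from by omega] at h1
      rw [h1]; ring
    simp only [hF]
    rw [LL op hop n i j hij hj x, LR op n i j hij hj x, RL op n i j hij hj x,
      RR n i j hij hj x, hpow]
    rw [← neg_smul]
    rw [show ∀ A B C D : (Fin (n + 1) → X) →₀ ℤ, A - B - (C - D) = A - C - (B - D) from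
      fun A B C D => by abel]
    congr 1
    ring
  set G : ℕ × ℕ → ℕ × ℕ := fun p => if p.1 < p.2 then (p.2 - 1, p.1) else (p.2, p.1 + 1)
    with hG
  have key : ∑ p ∈ Finset.range (n + 2) ×ˢ Finset.range (n + 3), F p = 0 := by
    have h1 : ∀ p ∈ Finset.range (n + 2) ×ˢ Finset.range (n + 3), F p + F (G p) = 0 := by
      intro p hp
      simp only [Finset.mem_product, Finset.mem_range] at hp
      simp only [hG]
      split_ifs with h
      · rw [hswap p.1 p.2 h hp.2]; simp
      · rw [hswap p.2 (p.1 + 1) (by omega) (by omega)]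
        simp
    have h3 : ∀ p ∈ Finset.range (n + 2) ×ˢ Finset.range (n + 3), F p ≠ 0 → G p ≠ p := by
      intro p hp _
      simp only [hG]
      split_ifs with h <;> (intro hc; rw [Prod.ext_iff] at hc; simp at hc; omega)
    have gmem : ∀ p ∈ Finset.range (n + 2) ×ˢ Finset.range (n + 3),
        G p ∈ Finset.range (n + 2) ×ˢ Finset.range (n + 3) := by
      intro p hp
      simp only [Finset.mem_product, Finset.mem_range] at hp
      simp only [hG]
      split_ifs with h <;> simp only [Finset.mem_product, Finset.mem_range] <;>
        exact ⟨by omega, by omega⟩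
    have h4 : ∀ p ∈ Finset.range (n + 2) ×ˢ Finset.range (n + 3), G (G p) = p := by
      intro p hp
      simp only [Finset.mem_product, Finset.mem_range] at hp
      simp only [hG]
      split_ifs with h h' h' <;> simp_all <;> (apply Prod.ext <;> simp <;> omega)
    exact Finset.sum_involution (fun p _ => G p) (fun p hp => h1 p hp)
      (fun p hp => h3 p hp) (fun p hp => gmem p hp) (fun p hp => h4 p hp)
  rw [rackBoundary_single, map_sum]
  simp only [map_smul, map_sub, rackBoundary_single]
  rw [← key, Finset.sum_product_right]
  apply Finset.sum_congr rfl
  intro j hj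
  rw [← Finset.sum_sub_distrib, Finset.smul_sum]
  apply Finset.sum_congr rfl
  intro i hi
  simp only [hF, smul_sub, smul_smul]
end
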